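/- Let V be a nonsingular Seifert matrix with symmetric form Q = V + V^t and T = V^{-1}V^t. Then det(Q) = Δ_T(1)·Δ_T(-1) in Q^*/(Q^*)^2, i.e., det(V + V^t) equals Δ_T(1)Δ_T(-1) up to a nonzero rational square. -/

import Mathlib

/-!
Over `ℚ`, `Δ_T(a) = det (V⁻¹ Vᵀ - a) = det V⁻¹ · det (Vᵀ - a V)`, so
`Δ_T(1) Δ_T(-1) = det V⁻² · det (V - Vᵀ) · det (V + Vᵀ)`. The unimodular factor `det (V - Vᵀ)`
is `1` and not `-1`, because the determinant of a real skew-symmetric matrix `A` is nonnegative: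
`det (t + A)` is a monic polynomial in `t` whose only possible real root is `0`, since
`v ⬝ (t + A) v = t (v ⬝ v)`.
-/

open Matrix Polynomial

namespace Matrix

variable {n : Type*} [Fintype n]

theorem dotProduct_mulVec_self_eq_zero_of_transpose_eq_neg {R : Type*} [CommRing R]
    [LinearOrder R] [IsStrictOrderedRing R] {A : Matrix n n R} (hA : Aᵀ = -A) (v : n → R) :
    v ⬝ᵥ A *ᵥ v = 0 := by
  have h : v ⬝ᵥ A *ᵥ v = -(v ⬝ᵥ A *ᵥ v) := by
    conv_lhs => rw [dotProduct_mulVec, ← mulVec_transpose, hA, neg_mulVec, neg_dotProduct,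
      dotProduct_comm]
  linarith

variable [DecidableEq n]

theorem eq_zero_of_isRoot_charpoly_of_transpose_eq_neg {K : Type*} [Field K] [LinearOrder K]
    [IsStrictOrderedRing K] {A : Matrix n n K} (hA : Aᵀ = -A) {t : K}
    (ht : A.charpoly.IsRoot t) : t = 0 := by
  rw [IsRoot, eval_charpoly] at ht
  obtain ⟨v, hv, hvt⟩ := exists_mulVec_eq_zero_iff.mpr ht
  have hAv : A *ᵥ v = t • v := by
    rw [sub_mulVec, scalar_apply, ← smul_one_eq_diagonal, smul_mulVec, one_mulVec,
      sub_eq_zero] at hvt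
    exact hvt.symm
  have htv : t * (v ⬝ᵥ v) = 0 := by
    rw [← smul_eq_mul, ← dotProduct_smul, ← hAv,
      dotProduct_mulVec_self_eq_zero_of_transpose_eq_neg hA]
  exact (mul_eq_zero.mp htv).resolve_right (dotProduct_self_eq_zero.not.mpr hv)

theorem det_nonneg_of_transpose_eq_neg {A : Matrix n n ℝ} (hA : Aᵀ = -A) : 0 ≤ A.det := by
  have hA' : (-A)ᵀ = -(-A) := by rw [transpose_neg, hA]
  have h := zero_le_eval_of_roots_le_of_leadingCoeff_nonneg (P := (-A).charpoly) (x := 0)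
    (fun y hy ↦ (eq_zero_of_isRoot_charpoly_of_transpose_eq_neg hA' hy).le)
    (by rw [(charpoly_monic _).leadingCoeff]; exact zero_le_one)
  simpa [eval_charpoly] using h

theorem det_eq_one_of_transpose_eq_neg {A : Matrix n n ℤ} (hA : Aᵀ = -A)
    (hdet : A.det = 1 ∨ A.det = -1) : A.det = 1 := by
  have hAℝ : (A.map ((↑) : ℤ → ℝ))ᵀ = -A.map (↑) := by
    rw [← transpose_map, hA, Matrix.map_neg _ Int.cast_neg]
  have hnonneg : (0 : ℝ) ≤ A.det := by
    rw [Int.cast_det]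
    exact det_nonneg_of_transpose_eq_neg hAℝ
  replace hnonneg : 0 ≤ A.det := by exact_mod_cast hnonneg
  omega

theorem eval_det_map_C_sub_X_smul_one {R : Type*} [CommRing R] (M : Matrix n n R) (a : R) :
    (M.map C - (X : R[X]) • (1 : Matrix n n R[X])).det.eval a = (M - a • 1).det := by
  rw [← coe_evalRingHom, RingHom.map_det]
  congr
  ext i j
  obtain rfl | hij := eq_or_ne i j <;> simp [*]

theorem det_inv_mul_sub_smul_one {K : Type*} [Field K] {V : Matrix n n K} (hV : V.det ≠ 0)
    (W : Matrix n n K) (a : K) : (V⁻¹ * W - a • 1).det = V.det⁻¹ * (W - a • V).det := by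
  have h : V⁻¹ * W - a • 1 = V⁻¹ * (W - a • V) := by
    rw [mul_sub, Matrix.mul_smul, nonsing_inv_mul V (isUnit_iff_ne_zero.mpr hV)]
  rw [h, det_mul, det_nonsing_inv, Ring.inverse_eq_inv']

end Matrix

/-- Let `V` be a nonsingular Seifert matrix with symmetric form `Q = V + Vᵀ` and
`T = V⁻¹Vᵀ` with characteristic polynomial `Δ_T(t) = det (T - t·I)`.  Then
`det (V + Vᵀ) = Δ_T(1) · Δ_T(-1)` up to a nonzero rational square. -/
theorem det_symmetric_form_eq_charpoly_values (g : ℕ)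
    (V : Matrix (Fin (2 * g)) (Fin (2 * g)) ℤ)
    (hS : (V - Vᵀ).det = 1 ∨ (V - Vᵀ).det = -1) (hV : V.det ≠ 0)
    (Vq : Matrix (Fin (2 * g)) (Fin (2 * g)) ℚ) (hVq : Vq = V.map (Int.cast : ℤ → ℚ))
    (T : Matrix (Fin (2 * g)) (Fin (2 * g)) ℚ) (hT : T = Vq⁻¹ * Vqᵀ)
    (ΔT : Polynomial ℚ) (hΔT : ΔT = ((T.map C) - (X : ℚ[X]) • (1 : Matrix (Fin (2 * g)) (Fin (2 * g)) ℚ[X])).det) :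
    ∃ c : ℚ, c ≠ 0 ∧ (Vq + Vqᵀ).det = c ^ 2 * (ΔT.eval 1 * ΔT.eval (-1)) := by
  have hskew : (V - Vᵀ)ᵀ = -(V - Vᵀ) := by rw [transpose_sub, transpose_transpose, neg_sub]
  have hdet : (Vq - Vqᵀ).det = 1 := by
    rw [hVq, ← transpose_map, ← Matrix.map_sub _ (fun _ _ ↦ Int.cast_sub _ _), ← Int.cast_det,
      det_eq_one_of_transpose_eq_neg hskew hS, Int.cast_one]
  have hVq0 : Vq.det ≠ 0 := by rw [hVq, ← Int.cast_det]; exact_mod_cast hV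
  have hΔ (a : ℚ) : ΔT.eval a = Vq.det⁻¹ * (Vqᵀ - a • Vq).det := by
    rw [hΔT, eval_det_map_C_sub_X_smul_one, hT, det_inv_mul_sub_smul_one hVq0]
  have hΔ1 : ΔT.eval 1 = Vq.det⁻¹ := by
    rw [hΔ, one_smul, ← det_transpose (Vqᵀ - Vq), transpose_sub, transpose_transpose, hdet,
      mul_one]
  have hΔm1 : ΔT.eval (-1) = Vq.det⁻¹ * (Vq + Vqᵀ).det := by
    rw [hΔ, neg_one_smul, sub_neg_eq_add, add_comm]
  refine ⟨Vq.det, hVq0, ?_⟩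
  rw [hΔ1, hΔm1]
  field_simp
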